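/- arXiv:1510.06083 — 4 statements merged into one kernel-verified Lean document; each statement's English description precedes it below -/
import Mathlib

section
/- Fix μ > 0 and λ > 0. For every b ∈ ℝ, ρ_μ(b;λ) + (1/2)μb² = 2λ·B(√(μ/(2λ)) b), where ρ_μ is the perspective penalty (ρ_μ(b;λ) = √(2μλ)|b| − (1/2)μb² if μb² ≤ 2λ, λ otherwise), and B is the reverse Huber penalty B(t) = |t| if |t| ≤ 1, and B(t) = (t²+1)/2 otherwise. -/
open Matrix Finset

/-- The perspective (minimax concave) penalty. -/
noncomputable def rho (δ lam b : ℝ) : ℝ :=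
  if δ * b^2 ≤ 2*lam then Real.sqrt (2*δ*lam) * |b| - (1/2)*δ*b^2 else lam

/-- The reverse Huber penalty. -/
noncomputable def revHuber (t : ℝ) : ℝ :=
  if |t| ≤ 1 then |t| else (t^2 + 1)/2

/-!
Under the substitution `t = √(μ/(2λ)) b` one has `μ b² = 2λ t²` and `√(2μλ) |b| = 2λ |t|`,
so the threshold `μ b² ≤ 2λ` of `rho` becomes `t² ≤ 1`, and both branches of
`rho μ λ b + μ b² / 2` are `2λ` times the corresponding branches of `revHuber t`.
-/

lemma revHuber_eq_ite_sq (t : ℝ) : revHuber t = if t ^ 2 ≤ 1 then |t| else (t ^ 2 + 1) / 2 := by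
  simp only [revHuber, sq_le_one_iff_abs_le_one]

lemma rho_add_half_mul_sq_eq_two_mul_revHuber {μ lam b t : ℝ} (hlam : 0 < lam)
    (hsq : μ * b ^ 2 = 2 * lam * t ^ 2)
    (habs : Real.sqrt (2 * μ * lam) * |b| = 2 * lam * |t|) :
    rho μ lam b + (1/2) * μ * b ^ 2 = 2 * lam * revHuber t := by
  have hcond : 2 * lam * t ^ 2 ≤ 2 * lam ↔ t ^ 2 ≤ 1 := by
    rw [mul_le_iff_le_one_right (by positivity)]
  rw [rho, revHuber_eq_ite_sq, hsq, habs]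
  simp only [hcond]
  split_ifs
  · ring
  · linear_combination (1/2) * hsq

lemma mul_sq_eq_two_mul_sq_sqrt_div_mul {μ lam : ℝ} (hμ : 0 ≤ μ) (hlam : 0 < lam) (b : ℝ) :
    μ * b ^ 2 = 2 * lam * (Real.sqrt (μ / (2 * lam)) * b) ^ 2 := by
  rw [mul_pow, Real.sq_sqrt (by positivity)]
  field_simp

lemma sqrt_two_mul_mul_abs_eq {μ lam : ℝ} (hlam : 0 < lam) (b : ℝ) :
    Real.sqrt (2 * μ * lam) * |b| = 2 * lam * |Real.sqrt (μ / (2 * lam)) * b| := by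
  have hsqrt : Real.sqrt (2 * μ * lam) = 2 * lam * Real.sqrt (μ / (2 * lam)) := by
    rw [show 2 * μ * lam = (2 * lam) ^ 2 * (μ / (2 * lam)) by field_simp,
      Real.sqrt_mul (by positivity), Real.sqrt_sq (by positivity)]
  rw [hsqrt, abs_mul, abs_of_nonneg (Real.sqrt_nonneg _), mul_assoc]

/-- the reverse Huber penalty as a special case of the perspective penalty. -/
theorem stmt4 (μ lam b : ℝ) (hμ : 0 < μ) (hlam : 0 < lam) :
    rho μ lam b + (1/2)*μ*b^2 = 2*lam * revHuber (Real.sqrt (μ/(2*lam)) * b) :=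
  rho_add_half_mul_sq_eq_two_mul_revHuber hlam
    (mul_sq_eq_two_mul_sq_sqrt_div_mul hμ.le hlam b) (sqrt_two_mul_mul_abs_eq hlam b)
end

section
/- Let λ > 0, δ > 0, and define ρ_δ(b;λ) as the perspective (minimax concave) penalty. Then the function b ↦ (δ/2)b² + ρ_δ(b;λ) is convex on ℝ. Consequently, if X^T X − diag(δ) ⪰ 0 with δᵢ ≥ 0 for all i, the function b ↦ (1/2)‖Xb−y‖₂² + ∑ᵢ ρ_{δᵢ}(bᵢ;λ) is convex on ℝ^p. -/
/-!
With `a = √(δ/2)` and `k = √λ`, the function `(δ/2)b² + ρ_δ(b;λ)` equals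
`2ak|b| + ((a|b| - k)₊)²`, a sum of a multiple of `|b|` and the square of a nonnegative convex
hinge, hence convex. For the penalized least squares objective, add and subtract
`∑ᵢ (δᵢ/2)bᵢ²`: what remains of the least squares term is `½ bᵀ(XᵀX - diag δ)b` plus an affine
function of `b`, convex because a positive semidefinite quadratic form is convex, and the rest is a
separable sum of the convex one-dimensional functions above.
-/

open Matrix Finset

theorem ConvexOn.sum {𝕜 E β ι : Type*} [Semiring 𝕜] [PartialOrder 𝕜] [AddCommMonoid E]
    [AddCommMonoid β] [PartialOrder β] [IsOrderedAddMonoid β] [SMul 𝕜 E] [DistribMulAction 𝕜 β]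
    {s : Set E} (hs : Convex 𝕜 s) {t : Finset ι} {f : ι → E → β}
    (hf : ∀ i ∈ t, ConvexOn 𝕜 s (f i)) : ConvexOn 𝕜 s (fun x => ∑ i ∈ t, f i x) := by
  induction t using Finset.cons_induction with
  | empty => exact ⟨hs, fun _ _ _ _ _ _ _ _ _ => by simp⟩
  | cons i t hi ih =>
    simp only [sum_cons]
    exact (hf i (mem_cons_self i t)).add (ih fun j hj => hf j (mem_cons_of_mem hj))

theorem ConvexOn.sum_comp_apply {ι E : Type*} [Fintype ι] [AddCommGroup E] [Module ℝ E]
    {f : ι → E → ℝ} (hf : ∀ i, ConvexOn ℝ Set.univ (f i)) :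
    ConvexOn ℝ Set.univ (fun b : ι → E => ∑ i, f i (b i)) :=
  ConvexOn.sum convex_univ fun i _ =>
    (hf i).comp_linearMap (LinearMap.proj (R := ℝ) (φ := fun _ => E) i)

theorem QuadraticMap.convexOn_of_nonneg {E : Type*} [AddCommGroup E] [Module ℝ E]
    (Q : QuadraticMap ℝ E ℝ) (hQ : ∀ v, 0 ≤ Q v) : ConvexOn ℝ Set.univ Q := by
  refine ⟨convex_univ, fun x _ z _ t s ht hs hts => ?_⟩
  have hadd : ∀ u v, Q (u + v) = Q u + Q v + polar Q u v := fun u v => by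
    rw [polar]; ring
  have hsub : Q (x - z) = Q x + Q z - polar Q x z := by
    rw [sub_eq_add_neg, hadd, Q.map_neg, polar_neg_right]; ring
  have key : Q (t • x + s • z) = t * Q x + s * Q z - t * s * Q (x - z) := by
    obtain rfl : s = 1 - t := by linarith
    rw [hsub, hadd, polar_smul_left, polar_smul_right, Q.map_smul, Q.map_smul]
    simp only [smul_eq_mul]
    ring
  rw [key, smul_eq_mul, smul_eq_mul]
  linarith [mul_nonneg (mul_nonneg ht hs) (hQ (x - z))]

theorem Matrix.PosSemidef.convexOn_dotProduct_mulVec {ι : Type*} [Fintype ι] [DecidableEq ι]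
    {M : Matrix ι ι ℝ} (hM : M.PosSemidef) : ConvexOn ℝ Set.univ (fun v => v ⬝ᵥ M *ᵥ v) := by
  have hQ : ⇑M.toQuadraticForm' = fun v => v ⬝ᵥ M *ᵥ v := funext fun v => by
    simp [toQuadraticForm', toLinearMap₂'_apply']
  rw [← hQ]
  exact M.toQuadraticForm'.convexOn_of_nonneg fun v => by
    rw [hQ]; exact hM.dotProduct_mulVec_nonneg v

section LeastSquares

variable {m ι : Type*} [Fintype m] [Fintype ι] [DecidableEq ι]

theorem half_sum_sq_mulVec_sub_sub_eq (X : Matrix m ι ℝ) (y : m → ℝ) (δ b : ι → ℝ) :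
    1 / 2 * ∑ i, ((X *ᵥ b) i - y i) ^ 2 - ∑ j, δ j / 2 * b j ^ 2 =
      1 / 2 * (b ⬝ᵥ (Xᵀ * X - diagonal δ) *ᵥ b) - (Xᵀ *ᵥ y) ⬝ᵥ b + 1 / 2 * (y ⬝ᵥ y) := by
  have hquad : b ⬝ᵥ (Xᵀ * X - diagonal δ) *ᵥ b = X *ᵥ b ⬝ᵥ X *ᵥ b - ∑ j, δ j * b j ^ 2 := by
    rw [sub_mulVec, dotProduct_sub, ← mulVec_mulVec, dotProduct_mulVec, vecMul_transpose]
    simp only [dotProduct, mulVec_diagonal]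
    congr 1
    exact sum_congr rfl fun j _ => by ring
  have hlin : (Xᵀ *ᵥ y) ⬝ᵥ b = y ⬝ᵥ X *ᵥ b := by
    rw [mulVec_transpose, dotProduct_mulVec]
  have hsq : ∑ i, ((X *ᵥ b) i - y i) ^ 2 = X *ᵥ b ⬝ᵥ X *ᵥ b - 2 * (y ⬝ᵥ X *ᵥ b) + y ⬝ᵥ y := by
    simp only [dotProduct, mul_sum, ← sum_sub_distrib, ← sum_add_distrib]
    exact sum_congr rfl fun i _ => by ring
  have hdiag : ∑ j, δ j / 2 * b j ^ 2 = 1 / 2 * ∑ j, δ j * b j ^ 2 := by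
    rw [mul_sum]
    exact sum_congr rfl fun j _ => by ring
  rw [hquad, hlin, hsq, hdiag]
  ring

theorem convexOn_half_sum_sq_mulVec_sub_sub {X : Matrix m ι ℝ} {δ : ι → ℝ}
    (hM : (Xᵀ * X - diagonal δ).PosSemidef) (y : m → ℝ) :
    ConvexOn ℝ Set.univ
      (fun b => 1 / 2 * ∑ i, ((X *ᵥ b) i - y i) ^ 2 - ∑ j, δ j / 2 * b j ^ 2) := by
  simp_rw [half_sum_sq_mulVec_sub_sub_eq]
  exact ((hM.convexOn_dotProduct_mulVec.smul (by norm_num)).sub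
    ((dotProductBilin ℝ ℝ (Xᵀ *ᵥ y)).concaveOn convex_univ)).add_const _

end LeastSquares

section Penalty

open Real

theorem half_mul_sq_add_rho_eq {δ lam : ℝ} (hδ : 0 ≤ δ) (hlam : 0 ≤ lam) (b : ℝ) :
    δ / 2 * b ^ 2 + rho δ lam b =
      2 * √(δ / 2) * √lam * |b| + max (√(δ / 2) * |b| - √lam) 0 ^ 2 := by
  set a := √(δ / 2)
  set k := √lam
  have ha : a ^ 2 = δ / 2 := sq_sqrt (by linarith)
  have hk : k ^ 2 = lam := sq_sqrt hlam
  have hsqrt : √(2 * δ * lam) = 2 * a * k := by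
    rw [show 2 * δ * lam = (2 * a * k) ^ 2 by rw [mul_pow, mul_pow, ha, hk]; ring]
    exact sqrt_sq (by positivity)
  have hcase : δ * b ^ 2 ≤ 2 * lam ↔ a * |b| ≤ k := by
    rw [← sq_le_sq₀ (by positivity) (sqrt_nonneg _), mul_pow, sq_abs, ha, hk]
    constructor <;> intro h <;> linarith
  unfold rho
  split_ifs with h
  · rw [hsqrt, max_eq_right (by linarith [hcase.1 h])]
    ring
  · rw [max_eq_left (by linarith [not_le.1 (mt hcase.2 h)]), sub_sq, mul_pow, sq_abs, ha, hk]
    ring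

theorem convexOn_half_mul_sq_add_rho {δ lam : ℝ} (hδ : 0 ≤ δ) (hlam : 0 ≤ lam) :
    ConvexOn ℝ Set.univ (fun b => δ / 2 * b ^ 2 + rho δ lam b) := by
  simp_rw [half_mul_sq_add_rho_eq hδ hlam]
  have habs : ConvexOn ℝ Set.univ (fun b : ℝ => |b|) := convexOn_univ_norm
  have hhinge : ConvexOn ℝ Set.univ (fun b => max (√(δ / 2) * |b| - √lam) 0) :=
    ((habs.smul (sqrt_nonneg _)).sub (concaveOn_const _ convex_univ)).sup
      (convexOn_const 0 convex_univ)
  exact (habs.smul (by positivity)).add (hhinge.pow (fun _ _ => le_max_right _ _) 2)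

end Penalty

/-- `b ↦ (δ/2)b² + ρ_δ(b;λ)` is convex; consequently under
`XᵀX − diag(δ) ⪰ 0` the penalized least squares objective is convex. -/
theorem stmt7 (n p : ℕ) (X : Matrix (Fin n) (Fin p) ℝ) (y : Fin n → ℝ)
    (lam : ℝ) (hlam : 0 < lam) :
    (∀ δ : ℝ, 0 < δ → ConvexOn ℝ Set.univ (fun b : ℝ => (δ/2)*b^2 + rho δ lam b)) ∧
    (∀ δ : Fin p → ℝ, (∀ i, 0 ≤ δ i) → (Xᵀ * X - Matrix.diagonal δ).PosSemidef →
      ConvexOn ℝ Set.univ (fun b : Fin p → ℝ =>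
        (1/2) * ∑ i, (X.mulVec b i - y i)^2 + ∑ i, rho (δ i) lam (b i))) := by
  refine ⟨fun δ hδ => convexOn_half_mul_sq_add_rho hδ.le hlam.le, fun δ hδ hM => ?_⟩
  have hpenalty : ConvexOn ℝ Set.univ
      (fun b : Fin p → ℝ => ∑ i, (δ i / 2 * b i ^ 2 + rho (δ i) lam (b i))) :=
    ConvexOn.sum_comp_apply fun i => convexOn_half_mul_sq_add_rho (hδ i) hlam.le
  refine ((convexOn_half_sum_sq_mulVec_sub_sub hM y).add hpenalty).congr fun b _ => ?_
  simp only [Pi.add_apply, sum_add_distrib]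
  ring
end

section
/- Suppose (ε, α, δ, t) is feasible for the dual SDP, i.e. [[ε, αᵀ],[α, XᵀX − diag(δ)]] ⪰ 0, [[δᵢ, tᵢ],[tᵢ, 2λ]] ⪰ 0 for all i, and αᵢ + (Xᵀy)ᵢ + tᵢ = 0 for all i. Then for every (b̄, s̄, z̄) with s̄ᵢz̄ᵢ ≥ b̄ᵢ², s̄ᵢ ≥ 0, z̄ᵢ ∈ [0,1], one has −(1/2)ε ≤ (1/2)b̄ᵀ(XᵀX − diag(δ))b̄ − (Xᵀy)ᵀb̄ + (1/2)∑ᵢδᵢs̄ᵢ + λ∑ᵢz̄ᵢ. -/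
/-!
Weak duality: the bordered matrix `[[ε, αᵀ], [α, XᵀX - diag δ]]` evaluated at `(1, b̄)`, and each
`[[δᵢ, tᵢ], [tᵢ, 2λ]]` paired with `[[s̄ᵢ, b̄ᵢ], [b̄ᵢ, z̄ᵢ]]` in the trace inner product, give nonnegative
quantities. Adding them up, the terms `tᵢ b̄ᵢ` cancel against `αᵢ = -(Xᵀy)ᵢ - tᵢ`.
-/

open Matrix Finset

lemma Matrix.PosSemidef.fin_two_entries {a b c : ℝ}
    (h : (!![a, b; b, c] : Matrix (Fin 2) (Fin 2) ℝ).PosSemidef) :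
    0 ≤ a ∧ 0 ≤ c ∧ b ^ 2 ≤ a * c := by
  have hdet := h.det_nonneg
  rw [det_fin_two_of] at hdet
  exact ⟨by simpa using h.diag_nonneg (i := 0), by simpa using h.diag_nonneg (i := 1), by nlinarith⟩

/-- The trace inner product of the PSD matrices `[[a, b], [b, c]]` and `[[s, x], [x, z]]`. -/
lemma mul_add_two_mul_add_mul_nonneg {a b c s x z : ℝ} (ha : 0 ≤ a) (hc : 0 ≤ c)
    (hb : b ^ 2 ≤ a * c) (hs : 0 ≤ s) (hz : 0 ≤ z) (hx : x ^ 2 ≤ s * z) :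
    0 ≤ a * s + 2 * (b * x) + c * z := by
  have hsq : (2 * (b * x)) ^ 2 ≤ (a * s + c * z) ^ 2 := calc
    (2 * (b * x)) ^ 2 = 4 * (b ^ 2 * x ^ 2) := by ring
    _ ≤ 4 * ((a * c) * (s * z)) := by gcongr
    _ ≤ (a * s + c * z) ^ 2 := by nlinarith [sq_nonneg (a * s - c * z)]
  linarith [(abs_le_of_sq_le_sq' hsq (by positivity)).1]

lemma Matrix.PosSemidef.bordered_quadratic_nonneg {ι : Type*} [Fintype ι] {ε : ℝ} {α : ι → ℝ}
    {M : Matrix ι ι ℝ}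
    (h : (fromBlocks (of fun _ _ => ε) (of fun (_ : Fin 1) j => α j) (of fun i (_ : Fin 1) => α i)
        M).PosSemidef) (b : ι → ℝ) :
    0 ≤ ε + 2 * (α ⬝ᵥ b) + b ⬝ᵥ M *ᵥ b := by
  have h := h.dotProduct_mulVec_nonneg (Sum.elim (fun _ => 1) b)
  simp only [dotProduct, mulVec] at h ⊢
  simp only [Pi.star_apply, star_trivial, Fintype.sum_sum_type, univ_unique, Fin.default_eq_zero,
    Sum.elim_inl, mul_one, sum_singleton, Sum.elim_inr, mul_add, sum_add_distrib, fromBlocks_apply₁₁,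
    of_apply, one_mul, sum_const, card_singleton, one_smul, fromBlocks_apply₂₁, mul_comm (b _),
    fromBlocks_apply₁₂, fromBlocks_apply₂₂] at h ⊢
  linarith

theorem stmt13_general (n p : ℕ) (X : Matrix (Fin n) (Fin p) ℝ) (y : Fin n → ℝ)
    (lam : ℝ)
    (ε : ℝ) (α δ t : Fin p → ℝ)
    (h1 : (Matrix.fromBlocks (Matrix.of fun _ _ => ε)
        (Matrix.of fun (_ : Fin 1) j => α j) (Matrix.of fun i (_ : Fin 1) => α i)
        (Xᵀ * X - Matrix.diagonal δ)).PosSemidef)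
    (h2 : ∀ i, (!![δ i, t i; t i, 2*lam] : Matrix (Fin 2) (Fin 2) ℝ).PosSemidef)
    (h3 : ∀ i, α i + Xᵀ.mulVec y i + t i = 0)
    (bb ss zz : Fin p → ℝ)
    (hfeas : ∀ i, ss i * zz i ≥ (bb i)^2 ∧ 0 ≤ ss i ∧ 0 ≤ zz i ∧ zz i ≤ 1) :
    -(1/2) * ε ≤ (1/2) * (bb ⬝ᵥ (Xᵀ * X - Matrix.diagonal δ).mulVec bb)
      - (Xᵀ.mulVec y) ⬝ᵥ bb + (1/2) * ∑ i, δ i * ss i + lam * ∑ i, zz i := by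
  have hblock := h1.bordered_quadratic_nonneg bb
  have hpairs : 0 ≤ ∑ i, (δ i * ss i + 2 * (t i * bb i) + 2 * lam * zz i) := by
    refine sum_nonneg fun i _ => ?_
    obtain ⟨hδ, hlam, ht⟩ := (h2 i).fin_two_entries
    obtain ⟨hsz, hs, hz, -⟩ := hfeas i
    exact mul_add_two_mul_add_mul_nonneg hδ hlam ht hs hz hsz
  have hα : α = -(Xᵀ *ᵥ y) - t := funext fun i => by
    rw [Pi.sub_apply, Pi.neg_apply]; linarith [h3 i]
  rw [hα, sub_dotProduct, neg_dotProduct] at hblock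
  simp only [sum_add_distrib, ← mul_sum, dotProduct] at hpairs hblock ⊢
  linarith

/-- weak duality between the dual SDP and the perspective relaxation. -/
theorem stmt13 (n p : ℕ) (X : Matrix (Fin n) (Fin p) ℝ) (y : Fin n → ℝ)
    (lam : ℝ) (hlam : 0 < lam)
    (ε : ℝ) (α δ t : Fin p → ℝ)
    (h1 : (Matrix.fromBlocks (Matrix.of fun _ _ => ε)
        (Matrix.of fun (_ : Fin 1) j => α j) (Matrix.of fun i (_ : Fin 1) => α i)
        (Xᵀ * X - Matrix.diagonal δ)).PosSemidef)
    (h2 : ∀ i, (!![δ i, t i; t i, 2*lam] : Matrix (Fin 2) (Fin 2) ℝ).PosSemidef)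
    (h3 : ∀ i, α i + Xᵀ.mulVec y i + t i = 0)
    (bb ss zz : Fin p → ℝ)
    (hfeas : ∀ i, ss i * zz i ≥ (bb i)^2 ∧ 0 ≤ ss i ∧ 0 ≤ zz i ∧ zz i ≤ 1) :
    -(1/2) * ε ≤ (1/2) * (bb ⬝ᵥ (Xᵀ * X - Matrix.diagonal δ).mulVec bb)
      - (Xᵀ.mulVec y) ⬝ᵥ bb + (1/2) * ∑ i, δ i * ss i + lam * ∑ i, zz i :=
  stmt13_general n p X y lam ε α δ t h1 h2 h3 bb ss zz hfeas
end

section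
/- The projection onto the (b,B) coordinates of the closed convex hull of M = {(b,B,z) : ∃ u with uᵢ ≠ 0 ∀i and a {0,1}^p-valued random vector ζ with b = E[u∘ζ], B = E[(u∘ζ)(u∘ζ)ᵀ], zᵢ = P(ζᵢ=1)} equals {(b,B) : B ⪰ bbᵀ}. In particular, for every b ∈ ℝ^p the pair (b, bbᵀ) lies in this projection. -/
open Matrix Finset

/-- The realization `u ∘ ζ` of a rescaled Bernoulli vector at state `t ∈ {0,1}^p`. -/
noncomputable def state {p : ℕ} (u : Fin p → ℝ) (t : Fin p → Bool) : Fin p → ℝ :=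
  fun i => u i * (if t i then 1 else 0)

/-- The moment set `M`: triples `(b, B, z)` given by the first two moments and
activation probabilities of a rescaled Bernoulli random vector `u ∘ ζ` with
all `uᵢ ≠ 0`. -/
def Mset (p : ℕ) : Set ((Fin p → ℝ) × Matrix (Fin p) (Fin p) ℝ × (Fin p → ℝ)) :=
  {x | ∃ (u : Fin p → ℝ) (w : (Fin p → Bool) → ℝ),
    (∀ i, u i ≠ 0) ∧ (∀ t, 0 ≤ w t) ∧ (∑ t, w t = 1) ∧
    (∀ i, x.1 i = ∑ t, w t * state u t i) ∧
    (∀ i j, x.2.1 i j = ∑ t, w t * (state u t i * state u t j)) ∧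
    (∀ i, x.2.2 i = ∑ t, w t * (if t i then 1 else 0))}

/-- Projection onto the `(b, B)` coordinates. -/
def projbB (p : ℕ) (x : (Fin p → ℝ) × Matrix (Fin p) (Fin p) ℝ × (Fin p → ℝ)) :
    (Fin p → ℝ) × Matrix (Fin p) (Fin p) ℝ :=
  (x.1, x.2.1)

/-!
Write `K` for the convex hull of the lifted points `(v, vvᵀ)`. Every point of `M` projects to an
average of lifted points (its realizations `u ∘ ζ`), and every lifted point `(v, vvᵀ)` is the
projection of a point of `M` (take `ζ` deterministic with support `{i | vᵢ ≠ 0}`), so the projection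
of `conv M` is exactly `K`. On the other hand `K = {(b, B) : B ⪰ bbᵀ}`: this set is convex and
closed, and conversely `(b, bbᵀ + Σₖ aₖaₖᵀ)` lies in `K` by induction on the number of rank-one
terms, since `(b, bbᵀ + C + aaᵀ)` is the midpoint of `(b ± a, (b ± a)(b ± a)ᵀ + C)`. As `K` is
closed, projecting the closure of `conv M` gives nothing more.
-/

open Set

namespace Matrix

open scoped ComplexOrder in
theorem isClosed_setOf_posSemidef {𝕜 n : Type*} [RCLike 𝕜] [Fintype n] :
    IsClosed {M : Matrix n n 𝕜 | M.PosSemidef} := by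
  simp_rw [posSemidef_iff_dotProduct_mulVec, ofPred_and, ofPred_forall]
  refine (isClosed_eq continuous_id.matrix_conjTranspose continuous_id).inter
    (isClosed_iInter fun x => isClosed_le continuous_const ?_)
  exact continuous_const.dotProduct (continuous_id.matrix_mulVec continuous_const)

end Matrix

section SecondMoments

variable {n : Type*}

def secondMomentSet (n : Type*) [Fintype n] : Set ((n → ℝ) × Matrix n n ℝ) :=
  {x | (x.2 - vecMulVec x.1 x.1).PosSemidef}

def secondMomentLift (v : n → ℝ) : (n → ℝ) × Matrix n n ℝ :=
  (v, vecMulVec v v)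

theorem convex_secondMomentSet [Fintype n] : Convex ℝ (secondMomentSet n) := by
  intro x hx y hy a c ha hc hac
  obtain rfl : c = 1 - a := by linarith
  have key : (a • x + (1 - a) • y).2 - vecMulVec (a • x + (1 - a) • y).1 (a • x + (1 - a) • y).1
      = a • (x.2 - vecMulVec x.1 x.1) + (1 - a) • (y.2 - vecMulVec y.1 y.1)
        + (a * (1 - a)) • vecMulVec (x.1 - y.1) (x.1 - y.1) := by
    ext i j
    simp only [Prod.snd_add, Prod.fst_add, Prod.smul_fst, Prod.smul_snd, Matrix.add_apply,
      Matrix.sub_apply, Matrix.smul_apply, vecMulVec_apply, Pi.add_apply, Pi.sub_apply,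
      Pi.smul_apply, smul_eq_mul]
    ring
  rw [secondMomentSet, mem_ofPred_eq, key]
  exact ((hx.smul ha).add (hy.smul hc)).add
    ((posSemidef_vecMulVec_self_star (x.1 - y.1)).smul (mul_nonneg ha hc))

theorem isClosed_secondMomentSet [Fintype n] : IsClosed (secondMomentSet n) :=
  (isClosed_setOf_posSemidef (𝕜 := ℝ) (n := n)).preimage <|
    continuous_snd.sub (continuous_fst.matrix_vecMulVec continuous_fst)

theorem secondMomentLift_mem_secondMomentSet [Fintype n] (v : n → ℝ) :
    secondMomentLift v ∈ secondMomentSet n := by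
  simp [secondMomentSet, secondMomentLift, PosSemidef.zero]

theorem mk_add_sum_vecMulVec_mem_convexHull {ι : Type*} (a : ι → n → ℝ) (s : Finset ι)
    (b : n → ℝ) :
    (b, vecMulVec b b + ∑ k ∈ s, vecMulVec (a k) (a k))
      ∈ convexHull ℝ (range (secondMomentLift (n := n))) := by
  classical
  induction s using Finset.induction_on generalizing b with
  | empty => simpa [secondMomentLift] using subset_convexHull ℝ _ (mem_range_self (f := secondMomentLift) b)
  | insert k s hk ih =>
    have midpoint :
        (1 / 2 : ℝ) • (b + a k, vecMulVec (b + a k) (b + a k) + ∑ k ∈ s, vecMulVec (a k) (a k))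
          + (1 / 2 : ℝ) • (b - a k, vecMulVec (b - a k) (b - a k)
            + ∑ k ∈ s, vecMulVec (a k) (a k))
        = (b, vecMulVec b b + ∑ k ∈ insert k s, vecMulVec (a k) (a k)) := by
      rw [sum_insert hk]
      ext <;>
        simp only [one_div, Prod.smul_mk, smul_add, Prod.mk_add_mk, Matrix.add_apply,
          Matrix.smul_apply, vecMulVec_apply, Pi.add_apply, Pi.sub_apply, Pi.smul_apply,
          smul_eq_mul] <;>
        ring
    rw [← midpoint]
    exact convex_convexHull ℝ _ (ih _) (ih _) (by norm_num) (by norm_num) (by norm_num)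

theorem convexHull_range_secondMomentLift [Fintype n] :
    convexHull ℝ (range (secondMomentLift (n := n))) = secondMomentSet n := by
  refine (convexHull_min (range_subset_iff.2 secondMomentLift_mem_secondMomentSet)
    convex_secondMomentSet).antisymm fun x hx => ?_
  obtain ⟨m, a, ha⟩ := posSemidef_iff_eq_sum_vecMulVec.mp hx
  have hx2 : x.2 = vecMulVec x.1 x.1 + ∑ k, vecMulVec (a k) (a k) := by
    simpa [sub_eq_iff_eq_add'] using ha
  simpa [← hx2] using mk_add_sum_vecMulVec_mem_convexHull a univ x.1

end SecondMoments

theorem image_projbB_Mset_subset_convexHull (p : ℕ) :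
    projbB p '' Mset p ⊆ convexHull ℝ (range (secondMomentLift (n := Fin p))) := by
  rintro _ ⟨x, ⟨u, w, -, hw0, hw1, hb, hB, -⟩, rfl⟩
  have hx : projbB p x = ∑ t, w t • secondMomentLift (state u t) := by
    ext i <;> simp [projbB, secondMomentLift, Prod.fst_sum, Prod.snd_sum, Finset.sum_apply, Matrix.sum_apply,
      vecMulVec_apply, hb, hB]
  rw [hx]
  exact (convex_convexHull ℝ _).sum_mem (fun t _ => hw0 t) hw1
    fun t _ => subset_convexHull ℝ _ (mem_range_self _)

theorem secondMomentLift_mem_image_projbB_Mset {p : ℕ} (v : Fin p → ℝ) :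
    secondMomentLift v ∈ projbB p '' Mset p := by
  classical
  set u : Fin p → ℝ := fun i => if v i = 0 then 1 else v i
  set support : Fin p → Bool := fun i => decide (v i ≠ 0)
  have hstate : state u support = v := by
    ext i
    by_cases h : v i = 0 <;> simp [state, u, support, h]
  refine ⟨(v, vecMulVec v v, fun i => if support i then 1 else 0),
    ⟨u, fun t => if t = support then 1 else 0, fun i => ?_, fun t => by positivity, by simp,
      fun i => ?_, fun i j => ?_, fun i => ?_⟩, rfl⟩
  · by_cases h : v i = 0 <;> simp [u, h]
  all_goals
    simp only [ite_mul, one_mul, zero_mul, sum_ite_eq', Finset.mem_univ, if_true, hstate,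
      vecMulVec_apply]

theorem convexHull_image_projbB_Mset (p : ℕ) :
    convexHull ℝ (projbB p '' Mset p) = secondMomentSet (Fin p) := by
  rw [← convexHull_range_secondMomentLift]
  exact (convexHull_min (image_projbB_Mset_subset_convexHull p) (convex_convexHull ℝ _)).antisymm
    (convexHull_mono (range_subset_iff.2 secondMomentLift_mem_image_projbB_Mset))

/-- the `(b,B)`-projection of the closed convex hull of `M` equals
`{(b,B) : B ⪰ bbᵀ}`; in particular `(b, bbᵀ)` always belongs to this projection. -/
theorem stmt18 (p : ℕ) :
    projbB p '' closure (convexHull ℝ (Mset p))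
      = {x : (Fin p → ℝ) × Matrix (Fin p) (Fin p) ℝ |
          (x.2 - Matrix.vecMulVec x.1 x.1).PosSemidef} ∧
    ∀ b : Fin p → ℝ,
      (b, Matrix.vecMulVec b b) ∈ projbB p '' closure (convexHull ℝ (Mset p)) := by
  have hlin : IsLinearMap ℝ (projbB p) := ⟨fun _ _ => rfl, fun _ _ => rfl⟩
  have hcont : Continuous (projbB p) := continuous_fst.prodMk (continuous_fst.comp continuous_snd)
  have hhull : projbB p '' convexHull ℝ (Mset p) = secondMomentSet (Fin p) := by
    rw [hlin.image_convexHull, convexHull_image_projbB_Mset]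
  have himage : projbB p '' closure (convexHull ℝ (Mset p)) = secondMomentSet (Fin p) :=
    ((image_closure_subset_closure_image hcont).trans
        (hhull ▸ isClosed_secondMomentSet.closure_subset)).antisymm
      (hhull ▸ image_mono subset_closure)
  exact ⟨himage, fun b => himage ▸ secondMomentLift_mem_secondMomentSet b⟩
end
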